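/- arXiv:2108.11928 — 6 statements merged into one kernel-verified Lean document; each statement's English description precedes it below -/
import Mathlib

section
/- The Horn matrix H is copositive: for every vector v ∈ ℝ⁵ with all entries nonnegative, vᵀHv ≥ 0. -/
/-!
The quadratic form of `Horn` has two decompositions (0-indexed coordinates, the second one
obtained from the first through the cyclic symmetry of `Horn`):
`(v₀ - v₁ + v₂ + v₃ - v₄)² + 4 v₁ v₃ + 4 v₂ (v₄ - v₃)` and
`(v₀ - v₁ + v₂ - v₃ + v₄)² + 4 v₁ v₄ + 4 v₀ (v₃ - v₄)`.
For `v ≥ 0` every term of the first is nonnegative when `v₃ ≤ v₄`, and of the second otherwise.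
-/

open Matrix

def Horn : Matrix (Fin 5) (Fin 5) ℝ :=
  !![1, -1,  1,  1, -1;
    -1,  1, -1,  1,  1;
     1, -1,  1, -1,  1;
     1,  1, -1,  1, -1;
    -1,  1,  1, -1,  1]

theorem dotProduct_horn_mulVec (v : Fin 5 → ℝ) :
    v ⬝ᵥ Horn *ᵥ v =
      (v 0 - v 1 + v 2 + v 3 - v 4) ^ 2 + 4 * (v 1 * v 3) + 4 * (v 2 * (v 4 - v 3)) := by
  simp only [Horn, dotProduct, mulVec, Fin.sum_univ_five, of_apply, cons_val', cons_val,
    cons_val_zero, cons_val_one, empty_val', cons_val_fin_one]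
  ring

theorem dotProduct_horn_mulVec' (v : Fin 5 → ℝ) :
    v ⬝ᵥ Horn *ᵥ v =
      (v 0 - v 1 + v 2 - v 3 + v 4) ^ 2 + 4 * (v 1 * v 4) + 4 * (v 0 * (v 3 - v 4)) := by
  rw [dotProduct_horn_mulVec]
  ring

/-- The Horn matrix is copositive. -/
theorem horn_copositive (v : Fin 5 → ℝ) (hv : ∀ i, 0 ≤ v i) :
    0 ≤ v ⬝ᵥ Horn.mulVec v := by
  rcases le_total (v 3) (v 4) with h | h
  · rw [dotProduct_horn_mulVec]
    have := mul_nonneg (hv 1) (hv 3)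
    have := mul_nonneg (hv 2) (sub_nonneg.2 h)
    positivity
  · rw [dotProduct_horn_mulVec']
    have := mul_nonneg (hv 1) (hv 4)
    have := mul_nonneg (hv 0) (sub_nonneg.2 h)
    positivity
end

section
/- A vector v ∈ ℝ⁵ with all entries nonnegative satisfies vᵀHv = 0 if and only if v lies in the union of cones ⋃_{i=1}^{5} cone(e_i+e_{i+1}, e_{i+1}+e_{i+2}) with indices taken modulo 5; that is, if and only if there exist an index i ∈ {1,…,5} and nonnegative reals a, b such that v = a(e_i+e_{i+1}) + b(e_{i+1}+e_{i+2}), where e₁,…,e₅ is the standard basis of ℝ⁵ and e₆ = e₁, e₇ = e₂. -/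
/-!
For every index `i` (mod 5) the Horn form `q v = vᵀ H v` satisfies
`q v = (vᵢ - vᵢ₊₁ + vᵢ₊₂ + vᵢ₊₃ - vᵢ₊₄)² + 4 vᵢ₊₂ vᵢ₊₄ + 4 vᵢ₊₃ (vᵢ₊₁ - vᵢ₊₂)`.
If `v ≥ 0` and `vᵢ₊₁` is a maximal coordinate, all three terms are nonnegative, so `q v = 0`
forces two cyclically adjacent coordinates of `v` to vanish. Once `vᵢ₊₃ = vᵢ₊₄ = 0` the identity
reads `q v = (vᵢ - vᵢ₊₁ + vᵢ₊₂)²`, which vanishes exactly when `vᵢ₊₁ = vᵢ + vᵢ₊₂`, i.e. on the cone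
spanned by `eᵢ + eᵢ₊₁` and `eᵢ₊₁ + eᵢ₊₂`.
-/

open Matrix

/-- The standard basis vector `e i` of `ℝ⁵`. -/
def e (i : Fin 5) : Fin 5 → ℝ := Pi.single i 1

theorem horn_quadForm_eq (v : Fin 5 → ℝ) (i : Fin 5) :
    v ⬝ᵥ Horn *ᵥ v = (v i - v (i + 1) + v (i + 2) + v (i + 3) - v (i + 4)) ^ 2
      + 4 * v (i + 2) * v (i + 4) + 4 * v (i + 3) * (v (i + 1) - v (i + 2)) := by
  fin_cases i <;> simp [Horn, dotProduct, mulVec, Fin.sum_univ_five] <;> ring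

theorem horn_quadForm_eq_zero_iff_of_apply_eq_zero {v : Fin 5 → ℝ} {i : Fin 5}
    (h3 : v (i + 3) = 0) (h4 : v (i + 4) = 0) :
    v ⬝ᵥ Horn *ᵥ v = 0 ↔ v (i + 1) = v i + v (i + 2) := by
  rw [horn_quadForm_eq v i, h3, h4]
  simp only [add_zero, sub_zero, mul_zero, zero_mul, pow_eq_zero_iff two_ne_zero]
  constructor <;> intro h <;> linarith

theorem exists_adjacent_zeros_of_horn_quadForm_eq_zero {v : Fin 5 → ℝ} (hv : ∀ i, 0 ≤ v i)
    (hq : v ⬝ᵥ Horn *ᵥ v = 0) : ∃ j, v j = 0 ∧ v (j + 1) = 0 := by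
  obtain ⟨m, hm⟩ := Finite.exists_max v
  set i := m + 4
  have hle : v (i + 2) ≤ v (i + 1) := by
    simp only [i, add_assoc, Fin.reduceAdd, add_zero]
    exact hm _
  have hprod : 0 ≤ v (i + 3) * (v (i + 1) - v (i + 2)) :=
    mul_nonneg (hv _) (sub_nonneg.2 hle)
  rw [horn_quadForm_eq v i] at hq
  have h24 : v (i + 2) * v (i + 4) = 0 := by
    nlinarith [mul_nonneg (hv (i + 2)) (hv (i + 4))]
  have h3 : v (i + 3) * (v (i + 1) - v (i + 2)) = 0 := by
    nlinarith [mul_nonneg (hv (i + 2)) (hv (i + 4))]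
  have hs : v i - v (i + 1) + v (i + 2) + v (i + 3) - v (i + 4) = 0 := by
    nlinarith [mul_nonneg (hv (i + 2)) (hv (i + 4))]
  rcases mul_eq_zero.1 h24 with h2 | h4
  · rcases mul_eq_zero.1 h3 with h3 | h12
    · exact ⟨i + 2, h2, by rwa [add_assoc]⟩
    · exact ⟨i + 1, by linarith, by rwa [add_assoc]⟩
  · refine ⟨i + 3, ?_, by rwa [add_assoc]⟩
    rcases mul_eq_zero.1 h3 with h3 | h12
    · exact h3
    · linarith [hv i, hv (i + 3)]

theorem eq_smul_add_smul_iff (v : Fin 5 → ℝ) (i : Fin 5) (a b : ℝ) :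
    v = a • (e i + e (i + 1)) + b • (e (i + 1) + e (i + 2)) ↔
      v i = a ∧ v (i + 1) = a + b ∧ v (i + 2) = b ∧ v (i + 3) = 0 ∧ v (i + 4) = 0 := by
  constructor
  · rintro rfl
    simp [e]
  · rintro ⟨h0, h1, h2, h3, h4⟩
    funext j
    obtain ⟨k, rfl⟩ : ∃ k, j = i + k := ⟨j - i, by abel⟩
    fin_cases k <;> simp [e, *]

/-- the nonnegative zeros of the Horn quadratic form are exactly the union of
the cones `cone(eᵢ+eᵢ₊₁, eᵢ₊₁+eᵢ₊₂)`, indices mod 5. -/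
theorem horn_zeros (v : Fin 5 → ℝ) (hv : ∀ i, 0 ≤ v i) :
    v ⬝ᵥ Horn.mulVec v = 0 ↔
      ∃ (i : Fin 5) (a b : ℝ), 0 ≤ a ∧ 0 ≤ b ∧
        v = a • (e i + e (i + 1)) + b • (e (i + 1) + e (i + 2)) := by
  constructor
  · intro hq
    obtain ⟨j, hj, hj1⟩ := exists_adjacent_zeros_of_horn_quadForm_eq_zero hv hq
    have h3 : v (j + 2 + 3) = 0 := by simpa only [add_assoc, Fin.reduceAdd, add_zero]
    have h4 : v (j + 2 + 4) = 0 := by simpa only [add_assoc, Fin.reduceAdd]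
    refine ⟨j + 2, v (j + 2), v (j + 2 + 2), hv _, hv _, ?_⟩
    rw [eq_smul_add_smul_iff]
    exact ⟨rfl, (horn_quadForm_eq_zero_iff_of_apply_eq_zero h3 h4).1 hq, rfl, h3, h4⟩
  · rintro ⟨i, a, b, -, -, hab⟩
    obtain ⟨rfl, h1, rfl, h3, h4⟩ := (eq_smul_add_smul_iff v i a b).1 hab
    exact (horn_quadForm_eq_zero_iff_of_apply_eq_zero h3 h4).2 h1
end

section
/- The Horn locus equals the image of Z_Horn under the map X ↦ XXᵀ. Precisely: a symmetric 5×5 matrix A is completely positive, positive definite, has all entries strictly positive, and satisfies trace(Aᵀ · D H D) = 0 for some diagonal matrix D with strictly positive diagonal entries, if and only if A = XXᵀ for some X ∈ Z_Horn, where Z_Horn is the set of matrices of the form diag(d₁,…,d₅) · B(y) · diag(z₁,…,z₅) with all d_i, y_i, z_i strictly positive and B(y) the 5×5 matrix with rows (1, 0, 0, y₄, y₅+1), (y₁+1, 1, 0, 0, y₅), (y₁, y₂+1, 1, 0, 0), (0, y₂, y₃+1, 1, 0), (0, 0, y₃, y₄+1, 1). -/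
open Matrix

/-- The matrix `B(y)` from the parametrization of the Horn locus
(with `y₁ = y 0, …, y₅ = y 4`). -/
def Bmat (y : Fin 5 → ℝ) : Matrix (Fin 5) (Fin 5) ℝ :=
  !![1, 0, 0, y 3, y 4 + 1;
     y 0 + 1, 1, 0, 0, y 4;
     y 0, y 1 + 1, 1, 0, 0;
     0, y 1, y 2 + 1, 1, 0;
     0, 0, y 2, y 3 + 1, 1]

/-- The variety `Z_Horn` of matrices `diag(d) · B(y) · diag(z)` with positive parameters. -/
def ZHorn : Set (Matrix (Fin 5) (Fin 5) ℝ) :=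
  {X | ∃ d y z : Fin 5 → ℝ, (∀ i, 0 < d i) ∧ (∀ i, 0 < y i) ∧ (∀ i, 0 < z i) ∧
    X = diagonal d * Bmat y * diagonal z}

/-!
For `A = B Bᵀ` with `B ≥ 0` and `D = diag d`, `trace (A D H D) = ∑ₖ Q (D bₖ)` over the columns `bₖ`
of `B`, where `Q v = vᵀ H v` is the Horn form. `Q` is copositive: after a cyclic rotation making
`v₄ ≤ v₃`, `Q v = (v₀ - v₁ + v₂ - v₃ + v₄)² + 4 v₁ v₄ + 4 v₀ (v₃ - v₄)`. Hence the trace vanishes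
iff every `D bₖ` is a nonnegative zero of `Q`, and these are exactly the vectors `α uᵢ + β uᵢ₊₁`,
`uᵢ` being the indicator of the edge `{i, i + 1}` of the 5-cycle.

Grouping the columns by `i` writes `D A D = ∑ᵢ (pᵢ uᵢuᵢᵀ + qᵢ (uᵢuᵢ₊₁ᵀ + uᵢ₊₁uᵢᵀ) + rᵢ uᵢ₊₁uᵢ₊₁ᵀ)`
with `qᵢ² ≤ pᵢ rᵢ` by Cauchy–Schwarz and `qᵢ = (D A D)ᵢ,ᵢ₊₂ > 0`. Such a cyclic sum equals
`∑ᵢ cᵢ bᵢbᵢᵀ` for `bᵢ = uᵢ + yᵢ uᵢ₊₁`, the columns of `B(y)`, as soon as `cᵢ yᵢ = qᵢ` and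
`cᵢ₊₁ = pᵢ₊₁ + rᵢ - qᵢ² / cᵢ`. This periodic Riccati recurrence has a positive solution by the
intermediate value theorem, because its `i`-th step maps `[pᵢ, ∞)` into `[pᵢ₊₁, pᵢ₊₁ + rᵢ]`.

Conversely, the columns of `B(y)` are zeros of `Q`, and `det B(y) = 2 + 2 ∏ yᵢ > 0`.
-/

open Matrix

section Riccati

open Fin.NatCast

variable {n : ℕ} [NeZero n] (p r q : Fin n → ℝ)

/-- Indices are read modulo `n` through the cast `ℕ → Fin n`. -/
noncomputable def riccatiOrbit (x : ℝ) : ℕ → ℝ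
  | 0 => x
  | k + 1 => p (k + 1 : ℕ) + r k - q k ^ 2 / riccatiOrbit x k

variable {p r q}

lemma le_riccatiOrbit (hp : ∀ j, 0 < p j) (hpqr : ∀ j, q j ^ 2 ≤ p j * r j) {x : ℝ}
    (hx : p 0 ≤ x) : ∀ k : ℕ, p k ≤ riccatiOrbit p r q x k
  | 0 => by simpa [riccatiOrbit] using hx
  | k + 1 => by
    have : q k ^ 2 / riccatiOrbit p r q x k ≤ r k :=
      calc q k ^ 2 / riccatiOrbit p r q x k
          ≤ q k ^ 2 / p k := div_le_div_of_nonneg_left (sq_nonneg _) (hp k)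
            (le_riccatiOrbit hp hpqr hx k)
        _ ≤ r k := (div_le_iff₀' (hp k)).2 (hpqr k)
    simp only [riccatiOrbit]
    linarith

lemma continuousOn_riccatiOrbit (hp : ∀ j, 0 < p j) (hpqr : ∀ j, q j ^ 2 ≤ p j * r j) :
    ∀ k : ℕ, ContinuousOn (riccatiOrbit p r q · k) (Set.Ici (p 0))
  | 0 => continuousOn_id
  | k + 1 => continuousOn_const.sub <| continuousOn_const.div
      (continuousOn_riccatiOrbit hp hpqr k)
      fun _ hx => ((hp k).trans_le (le_riccatiOrbit hp hpqr hx k)).ne'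

lemma exists_riccatiOrbit_eq_self (hp : ∀ j, 0 < p j) (hpqr : ∀ j, q j ^ 2 ≤ p j * r j) :
    ∃ x, p 0 ≤ x ∧ riccatiOrbit p r q x n = x := by
  set m : Fin n := ((n - 1 : ℕ) : Fin n)
  have hn : n = (n - 1) + 1 := (Nat.succ_pred_eq_of_pos (Nat.pos_of_neZero n)).symm
  have hr : 0 ≤ r m := nonneg_of_mul_nonneg_right ((sq_nonneg _).trans (hpqr m)) (hp m)
  have hle : p 0 ≤ p 0 + r m := le_add_of_nonneg_right hr
  have hcont : ContinuousOn (fun x => riccatiOrbit p r q x n - x) (Set.Icc (p 0) (p 0 + r m)) :=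
    ((continuousOn_riccatiOrbit hp hpqr _).mono Set.Icc_subset_Ici_self).sub continuousOn_id
  have hlow : 0 ≤ riccatiOrbit p r q (p 0) n - p 0 := by
    simpa using le_riccatiOrbit hp hpqr le_rfl n
  have hhigh : riccatiOrbit p r q (p 0 + r m) n - (p 0 + r m) ≤ 0 := by
    have : 0 ≤ q m ^ 2 / riccatiOrbit p r q (p 0 + r m) (n - 1) :=
      div_nonneg (sq_nonneg _) ((hp m).trans_le (le_riccatiOrbit hp hpqr hle _)).le
    have hunfold : riccatiOrbit p r q (p 0 + r m) (n - 1 + 1) =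
        p ((n - 1 + 1 : ℕ) : Fin n) + r m - q m ^ 2 / riccatiOrbit p r q (p 0 + r m) (n - 1) := rfl
    rw [← hn, Fin.natCast_self] at hunfold
    linarith
  obtain ⟨x, hx, hfix⟩ := intermediate_value_Icc' hle hcont ⟨hhigh, hlow⟩
  exact ⟨x, hx.1, sub_eq_zero.1 hfix⟩

theorem exists_pos_riccati_cycle (hp : ∀ j, 0 < p j) (hpqr : ∀ j, q j ^ 2 ≤ p j * r j) :
    ∃ c : Fin n → ℝ, (∀ j, 0 < c j) ∧ ∀ j, c (j + 1) = p (j + 1) + r j - q j ^ 2 / c j := by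
  obtain ⟨x, hx, hfix⟩ := exists_riccatiOrbit_eq_self hp hpqr
  refine ⟨fun j => riccatiOrbit p r q x j, fun j => ?_, fun j => ?_⟩
  · simpa using (hp _).trans_le (le_riccatiOrbit hp hpqr hx j)
  · have hsucc : riccatiOrbit p r q x (j + 1 : Fin n) = riccatiOrbit p r q x (j + 1 : ℕ) := by
      rcases (Nat.add_one_le_of_lt j.isLt).lt_or_eq with hlt | hlast
      · rw [Fin.val_add_one_of_lt' hlt]
      · have hwrap : j + 1 = 0 := by
          rw [← Fin.cast_val_eq_self j, ← Nat.cast_add_one, hlast, Fin.natCast_self]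
        rw [hwrap, hlast, hfix]
        rfl
    simp [hsucc, riccatiOrbit]

end Riccati

section CyclicGram

variable {n : ℕ} [NeZero n] {ι κ : Type*} [Fintype κ]

lemma sum_tridiagonal_eq_sum_sq {R : Type*} [CommRing R] (u : Fin n → ι → R) {p q r c y : Fin n → R}
    (hq : ∀ j, c j * y j = q j) (hpr : ∀ j, c (j + 1) + c j * y j ^ 2 = p (j + 1) + r j) (l m : ι) :
    ∑ j, (p j * (u j l * u j m) + q j * (u j l * u (j + 1) m + u (j + 1) l * u j m) +
        r j * (u (j + 1) l * u (j + 1) m)) =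
      ∑ j, c j * ((u j l + y j * u (j + 1) l) * (u j m + y j * u (j + 1) m)) := by
  have shift (f g : Fin n → R) : ∑ j, (f j * (u j l * u j m) + g j) =
      ∑ j, (f (j + 1) * (u (j + 1) l * u (j + 1) m) + g j) := by
    simp only [Finset.sum_add_distrib,
      ← Equiv.sum_comp (Equiv.addRight 1) (fun j => f j * (u j l * u j m)), Equiv.coe_addRight]
  calc _ = ∑ j, (p j * (u j l * u j m) + (q j * (u j l * u (j + 1) m + u (j + 1) l * u j m) +
        r j * (u (j + 1) l * u (j + 1) m))) := Finset.sum_congr rfl fun j _ => by ring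
    _ = ∑ j, (c j * (u j l * u j m) + (c j * y j * (u j l * u (j + 1) m + u (j + 1) l * u j m) +
        c j * y j ^ 2 * (u (j + 1) l * u (j + 1) m))) := by
      rw [shift, shift]
      refine Finset.sum_congr rfl fun j _ => ?_
      rw [← hq]
      linear_combination (u (j + 1) l * u (j + 1) m) * (hpr j).symm
    _ = _ := Finset.sum_congr rfl fun j _ => by ring

lemma sum_mul_eq_sum_fiberwise {R : Type*} [CommRing R] (u : Fin n → ι → R) (I : κ → Fin n)
    (α β : κ → R) {w : κ → ι → R} (hw : ∀ k l, w k l = α k * u (I k) l + β k * u (I k + 1) l)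
    (l m : ι) :
    ∑ k, w k l * w k m =
      ∑ j, ((∑ k with I k = j, α k ^ 2) * (u j l * u j m) +
        (∑ k with I k = j, α k * β k) * (u j l * u (j + 1) m + u (j + 1) l * u j m) +
        (∑ k with I k = j, β k ^ 2) * (u (j + 1) l * u (j + 1) m)) := by
  rw [← Finset.sum_fiberwise Finset.univ I]
  refine Finset.sum_congr rfl fun j _ => ?_
  simp only [Finset.sum_mul, ← Finset.sum_add_distrib]
  refine Finset.sum_congr rfl fun k hk => ?_
  rw [hw, hw, (Finset.mem_filter.1 hk).2]
  ring

theorem exists_cyclic_gram_factorization (u : Fin n → ι → ℝ) {w : κ → ι → ℝ} (I : κ → Fin n)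
    (α β : κ → ℝ) (hw : ∀ k l, w k l = α k * u (I k) l + β k * u (I k + 1) l)
    (hq : ∀ j, 0 < ∑ k with I k = j, α k * β k) :
    ∃ c y : Fin n → ℝ, (∀ j, 0 < c j) ∧ (∀ j, 0 < y j) ∧ ∀ l m,
      ∑ k, w k l * w k m =
        ∑ j, c j * ((u j l + y j * u (j + 1) l) * (u j m + y j * u (j + 1) m)) := by
  set p := fun j => ∑ k with I k = j, α k ^ 2
  set q := fun j => ∑ k with I k = j, α k * β k
  set r := fun j => ∑ k with I k = j, β k ^ 2
  have hpqr : ∀ j, q j ^ 2 ≤ p j * r j := fun j => Finset.sum_mul_sq_le_sq_mul_sq _ _ _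
  have hp : ∀ j, 0 < p j := fun j =>
    pos_of_mul_pos_left ((pow_pos (hq j) 2).trans_le (hpqr j))
      (Finset.sum_nonneg fun k _ => sq_nonneg (β k))
  obtain ⟨c, hc, hrec⟩ := exists_pos_riccati_cycle hp hpqr
  refine ⟨c, fun j => q j / c j, hc, fun j => div_pos (hq j) (hc j), fun l m => ?_⟩
  rw [sum_mul_eq_sum_fiberwise u I α β hw]
  refine sum_tridiagonal_eq_sum_sq u (fun j => mul_div_cancel₀ _ (hc j).ne') (fun j => ?_) l m
  rw [hrec j]
  field_simp
  ring

end CyclicGram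

lemma trace_mul_transpose_diagonal {m κ R : Type*} [Fintype m] [Fintype κ] [DecidableEq m]
    [CommRing R]     (B : Matrix m κ R) (d : m → R) (S : Matrix m m R) :
    trace ((B * Bᵀ)ᵀ * (diagonal d * S * diagonal d)) =
      ∑ k, (fun i => d i * B i k) ⬝ᵥ S *ᵥ (fun i => d i * B i k) := by
  have hsandwich : Bᵀ * (diagonal d * S * diagonal d * B) =
      (diagonal d * B)ᵀ * S * (diagonal d * B) := by
    simp only [transpose_mul, diagonal_transpose, Matrix.mul_assoc]
  rw [transpose_mul, transpose_transpose, Matrix.mul_assoc, trace_mul_comm, Matrix.mul_assoc,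
    hsandwich, trace]
  refine Finset.sum_congr rfl fun k _ => ?_
  simp only [diag, mul_apply, transpose_apply, diagonal_apply, ite_mul, zero_mul, Finset.sum_ite_eq,
    Finset.mem_univ, if_true, dotProduct, mulVec, Finset.sum_mul, Finset.mul_sum]
  rw [Finset.sum_comm]
  simp only [mul_assoc]

lemma Fin.exists_apply_add_one_le {n : ℕ} [NeZero n] {M : Type*} [AddCommMonoid M] [LinearOrder M]
    [IsOrderedCancelAddMonoid M] (v : Fin n → M) : ∃ j, v (j + 1) ≤ v j := by
  by_contra! h
  have := Finset.sum_lt_sum_of_nonempty Finset.univ_nonempty fun j _ => h j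
  rw [Fintype.sum_equiv (Equiv.addRight 1) (fun j => v (j + 1)) v fun _ => rfl] at this
  exact lt_irrefl _ this

section CycleEdge

variable {n : ℕ} [NeZero n]

def cycleEdge (j : Fin n) : Fin n → ℝ := fun l => if l = j ∨ l = j + 1 then 1 else 0

lemma cycleEdge_sub (i s l : Fin n) : cycleEdge i (l - s) = cycleEdge (i + s) l := by
  simp only [cycleEdge, sub_eq_iff_eq_add, add_right_comm i 1 s]

end CycleEdge

def hornForm (v : Fin 5 → ℝ) : ℝ := v ⬝ᵥ Horn *ᵥ v

lemma hornForm_eq_sum (v : Fin 5 → ℝ) :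
    hornForm v = ∑ i, (v i ^ 2 - 2 * v i * v (i + 1) + 2 * v i * v (i + 2)) := by
  simp [hornForm, Horn, dotProduct, mulVec, Fin.sum_univ_five]
  ring

lemma hornForm_comp_add_right (v : Fin 5 → ℝ) (s : Fin 5) :
    hornForm (fun i => v (i + s)) = hornForm v := by
  simp only [hornForm_eq_sum]
  exact Fintype.sum_equiv (Equiv.addRight s) _ _ fun i => by simp [add_right_comm _ s]

lemma hornForm_eq_sq_add (v : Fin 5 → ℝ) :
    hornForm v = (v 0 - v 1 + v 2 - v 3 + v 4) ^ 2 + 4 * v 1 * v 4 + 4 * v 0 * (v 3 - v 4) := by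
  simp [hornForm_eq_sum, Fin.sum_univ_five]
  ring

lemma hornForm_smul (a : ℝ) (v : Fin 5 → ℝ) : hornForm (a • v) = a ^ 2 * hornForm v := by
  simp only [hornForm, mulVec_smul, smul_dotProduct, dotProduct_smul, smul_eq_mul]
  ring

lemma exists_rotation_le (v : Fin 5 → ℝ) : ∃ s, v (4 + s) ≤ v (3 + s) := by
  obtain ⟨j, hj⟩ := Fin.exists_apply_add_one_le v
  refine ⟨j - 3, ?_⟩
  rwa [show 4 + (j - 3) = j + 1 by omega, show 3 + (j - 3) = j by omega]

lemma hornForm_nonneg {v : Fin 5 → ℝ} (hv : ∀ i, 0 ≤ v i) : 0 ≤ hornForm v := by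
  obtain ⟨s, hs⟩ := exists_rotation_le v
  rw [← hornForm_comp_add_right v s, hornForm_eq_sq_add]
  nlinarith [sq_nonneg (v (0 + s) - v (1 + s) + v (2 + s) - v (3 + s) + v (4 + s)),
    mul_nonneg (hv (1 + s)) (hv (4 + s)), mul_nonneg (hv (0 + s)) (sub_nonneg.2 hs)]

lemma exists_cycleEdge_of_hornForm_eq_zero_of_le {v : Fin 5 → ℝ} (hv : ∀ i, 0 ≤ v i)
    (h43 : v 4 ≤ v 3) (h : hornForm v = 0) : ∃ i α β, ∀ l, v l = α * cycleEdge i l + β * cycleEdge (i + 1) l := by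
  rw [hornForm_eq_sq_add] at h
  have := sq_nonneg (v 0 - v 1 + v 2 - v 3 + v 4)
  have := mul_nonneg (hv 1) (hv 4)
  have := mul_nonneg (hv 0) (sub_nonneg.2 h43)
  have hsq : v 0 - v 1 + v 2 - v 3 + v 4 = 0 := pow_eq_zero_iff two_ne_zero |>.1 (by linarith)
  have h14 : v 1 * v 4 = 0 := by linarith
  have h03 : v 0 * (v 3 - v 4) = 0 := by linarith
  have := hv 0; have := hv 2
  rcases mul_eq_zero.1 h14 with h1 | h4 <;> rcases mul_eq_zero.1 h03 with h0 | h34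
  · exact ⟨2, v 2, v 4, fun l => by fin_cases l <;> simp [cycleEdge] <;> linarith⟩
  · exact ⟨3, v 3, 0, fun l => by fin_cases l <;> simp [cycleEdge] <;> linarith⟩
  · exact ⟨1, v 1, v 3, fun l => by fin_cases l <;> simp [cycleEdge] <;> linarith⟩
  · exact ⟨0, v 0, v 2, fun l => by fin_cases l <;> simp [cycleEdge] <;> linarith⟩

theorem exists_cycleEdge_of_hornForm_eq_zero {v : Fin 5 → ℝ} (hv : ∀ i, 0 ≤ v i)
    (h : hornForm v = 0) :
    ∃ i α β, ∀ l, v l = α * cycleEdge i l + β * cycleEdge (i + 1) l := by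
  obtain ⟨s, hs⟩ := exists_rotation_le v
  obtain ⟨i, α, β, hw⟩ := exists_cycleEdge_of_hornForm_eq_zero_of_le (v := fun l => v (l + s))
    (fun l => hv _) (by simpa only [add_comm] using hs) ((hornForm_comp_add_right v s).trans h)
  refine ⟨i + s, α, β, fun l => ?_⟩
  rw [add_right_comm, ← cycleEdge_sub, ← cycleEdge_sub, ← hw, sub_add_cancel]

lemma Bmat_apply (y : Fin 5 → ℝ) (l j : Fin 5) :
    Bmat y l j = cycleEdge j l + y j * cycleEdge (j + 1) l := by
  fin_cases l <;> fin_cases j <;> simp [Bmat, cycleEdge] <;> ring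

lemma hornForm_Bmat_col (y : Fin 5 → ℝ) (j : Fin 5) : hornForm (fun l => Bmat y l j) = 0 := by
  rw [hornForm_eq_sq_add]
  fin_cases j <;> simp [Bmat] <;> ring

lemma det_Bmat (y : Fin 5 → ℝ) : (Bmat y).det = 2 + 2 * (y 0 * y 1 * y 2 * y 3 * y 4) := by
  simp [Bmat, Matrix.det_succ_row_zero, Fin.sum_univ_succ, Fin.succAbove]
  ring

lemma Bmat_pos {y : Fin 5 → ℝ} (hy : ∀ i, 0 < y i) {l j : Fin 5} (h : (l - j).val ≤ 2) :
    0 < Bmat y l j := by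
  have := hy 0; have := hy 1; have := hy 2; have := hy 3; have := hy 4
  fin_cases l <;> fin_cases j <;> simp +decide [Bmat] at h ⊢ <;> linarith

lemma cycleEdge_comb_mul_comb_add_two (i j : Fin 5) (a b : ℝ) :
    (a * cycleEdge i j + b * cycleEdge (i + 1) j) *
      (a * cycleEdge i (j + 2) + b * cycleEdge (i + 1) (j + 2)) = if i = j then a * b else 0 := by
  fin_cases i <;> fin_cases j <;> simp [cycleEdge]

lemma nonneg_of_mem_ZHorn {X : Matrix (Fin 5) (Fin 5) ℝ} (hX : X ∈ ZHorn) : ∀ i j, 0 ≤ X i j := by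
  obtain ⟨d, y, z, hd, hy, hz, rfl⟩ := hX
  intro i j
  rw [mul_diagonal, diagonal_mul, Bmat_apply]
  have := hd i; have := (hy j).le; have := hz j
  unfold cycleEdge
  positivity

lemma det_ne_zero_of_mem_ZHorn {X : Matrix (Fin 5) (Fin 5) ℝ} (hX : X ∈ ZHorn) : X.det ≠ 0 := by
  obtain ⟨d, y, z, hd, hy, hz, rfl⟩ := hX
  have := hy 0; have := hy 1; have := hy 2; have := hy 3; have := hy 4
  have := Finset.prod_pos fun i (_ : i ∈ Finset.univ) => hd i
  have := Finset.prod_pos fun i (_ : i ∈ Finset.univ) => hz i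
  rw [det_mul, det_mul, det_diagonal, det_diagonal, det_Bmat]
  positivity

lemma posDef_mul_transpose_of_mem_ZHorn {X : Matrix (Fin 5) (Fin 5) ℝ} (hX : X ∈ ZHorn) :
    (X * Xᵀ).PosDef := by
  have hX : IsUnit X := (isUnit_iff_isUnit_det X).2 (det_ne_zero_of_mem_ZHorn hX).isUnit
  simpa using PosDef.mul_conjTranspose_self X (vecMul_injective_iff_isUnit.2 hX)

lemma mul_transpose_pos_of_mem_ZHorn {X : Matrix (Fin 5) (Fin 5) ℝ} (hX : X ∈ ZHorn) (i j : Fin 5) :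
    0 < (X * Xᵀ) i j := by
  have hnn := nonneg_of_mem_ZHorn hX
  obtain ⟨d, y, z, hd, hy, hz, rfl⟩ := hX
  obtain ⟨k, hik, hjk⟩ : ∃ k : Fin 5, (i - k).val ≤ 2 ∧ (j - k).val ≤ 2 := by
    revert i j; decide
  rw [mul_apply]
  refine Finset.sum_pos' (fun k _ => mul_nonneg (hnn i k) (hnn j k)) ⟨k, Finset.mem_univ k, ?_⟩
  simp only [transpose_apply, mul_diagonal, diagonal_mul]
  have := Bmat_pos hy hik; have := Bmat_pos hy hjk; have := hd i; have := hd j; have := hz k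
  positivity

lemma exists_trace_eq_zero_of_mem_ZHorn {X : Matrix (Fin 5) (Fin 5) ℝ} (hX : X ∈ ZHorn) :
    ∃ d : Fin 5 → ℝ, (∀ i, 0 < d i) ∧ trace ((X * Xᵀ)ᵀ * (diagonal d * Horn * diagonal d)) = 0 := by
  obtain ⟨d, y, z, hd, hy, hz, rfl⟩ := hX
  refine ⟨d⁻¹, fun i => inv_pos.2 (hd i), ?_⟩
  rw [trace_mul_transpose_diagonal]
  refine Finset.sum_eq_zero fun k _ => ?_
  have hcol : (fun i => d⁻¹ i * (diagonal d * Bmat y * diagonal z) i k) =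
      z k • fun i => Bmat y i k := by
    ext i
    simp only [mul_diagonal, diagonal_mul, Pi.inv_apply, Pi.smul_apply, smul_eq_mul]
    field_simp [(hd i).ne']
  rw [← hornForm, hcol, hornForm_smul, hornForm_Bmat_col, mul_zero]

theorem exists_Bmat_gram_of_hornForm_eq_zero {κ : Type*} [Fintype κ] {w : κ → Fin 5 → ℝ}
    (hw : ∀ k i, 0 ≤ w k i) (hzero : ∀ k, hornForm (w k) = 0)
    (hpos : ∀ j, 0 < ∑ k, w k j * w k (j + 2)) :
    ∃ c y : Fin 5 → ℝ, (∀ j, 0 < c j) ∧ (∀ j, 0 < y j) ∧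
      ∀ l m, ∑ k, w k l * w k m = ∑ j, c j * (Bmat y l j * Bmat y m j) := by
  choose I α β hrep using fun k => exists_cycleEdge_of_hornForm_eq_zero (hw k) (hzero k)
  have hq : ∀ j, ∑ k with I k = j, α k * β k = ∑ k, w k j * w k (j + 2) := fun j => by
    rw [Finset.sum_filter]
    exact Finset.sum_congr rfl fun k _ => by rw [hrep, hrep, cycleEdge_comb_mul_comb_add_two]
  obtain ⟨c, y, hc, hy, hgram⟩ :=
    exists_cyclic_gram_factorization cycleEdge I α β hrep fun j => (hq j).symm ▸ hpos j
  exact ⟨c, y, hc, hy, fun l m => by simp only [hgram, Bmat_apply]⟩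

lemma exists_mem_ZHorn_eq_mul_transpose {A : Matrix (Fin 5) (Fin 5) ℝ} {d c y : Fin 5 → ℝ}
    (hd : ∀ i, 0 < d i) (hc : ∀ j, 0 < c j) (hy : ∀ j, 0 < y j)
    (h : ∀ l m, d l * A l m * d m = ∑ j, c j * (Bmat y l j * Bmat y m j)) :
    ∃ X ∈ ZHorn, A = X * Xᵀ := by
  refine ⟨diagonal d⁻¹ * Bmat y * diagonal (fun j => √(c j)),
    ⟨d⁻¹, y, _, fun i => inv_pos.2 (hd i), hy, fun j => Real.sqrt_pos.2 (hc j), rfl⟩, ?_⟩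
  ext l m
  have hA : A l m = (d l)⁻¹ * (d m)⁻¹ * (d l * A l m * d m) := by
    field_simp [(hd l).ne', (hd m).ne']
  rw [hA, h, Finset.mul_sum, mul_apply]
  refine Finset.sum_congr rfl fun j _ => ?_
  simp only [transpose_apply, mul_diagonal, diagonal_mul, Pi.inv_apply]
  linear_combination -((d l)⁻¹ * (d m)⁻¹ * Bmat y l j * Bmat y m j) * Real.sq_sqrt (hc j).le

theorem horn_locus_eq_image_general (A : Matrix (Fin 5) (Fin 5) ℝ) :
    ((∃ (k : ℕ) (B : Matrix (Fin 5) (Fin k) ℝ), (∀ i j, 0 ≤ B i j) ∧ A = B * Bᵀ) ∧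
      A.PosDef ∧ (∀ i j, 0 < A i j) ∧
      (∃ d : Fin 5 → ℝ, (∀ i, 0 < d i) ∧
        Matrix.trace (Aᵀ * (diagonal d * Horn * diagonal d)) = 0)) ↔
    ∃ X ∈ ZHorn, A = X * Xᵀ := by
  constructor
  · rintro ⟨⟨κ, B, hB, rfl⟩, -, hpos, d, hd, htr⟩
    set w : Fin κ → Fin 5 → ℝ := fun k i => d i * B i k
    have hw : ∀ k i, 0 ≤ w k i := fun k i => mul_nonneg (hd i).le (hB i k)
    have hDAD : ∀ l m, d l * (B * Bᵀ) l m * d m = ∑ k, w k l * w k m := fun l m => by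
      simp only [w, mul_apply, transpose_apply, Finset.mul_sum, Finset.sum_mul]
      exact Finset.sum_congr rfl fun k _ => by ring
    have hzero : ∀ k, hornForm (w k) = 0 := by
      rw [trace_mul_transpose_diagonal] at htr
      exact fun k => (Finset.sum_eq_zero_iff_of_nonneg fun k _ => hornForm_nonneg (hw k)).1 htr k
        (Finset.mem_univ k)
    obtain ⟨c, y, hc, hy, hgram⟩ := exists_Bmat_gram_of_hornForm_eq_zero hw hzero fun j => by
      rw [← hDAD]
      have := hpos j (j + 2); have := hd j; have := hd (j + 2)
      positivity
    exact exists_mem_ZHorn_eq_mul_transpose hd hc hy fun l m => (hDAD l m).trans (hgram l m)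
  · rintro ⟨X, hX, rfl⟩
    exact ⟨⟨5, X, nonneg_of_mem_ZHorn hX, rfl⟩, posDef_mul_transpose_of_mem_ZHorn hX,
      mul_transpose_pos_of_mem_ZHorn hX, exists_trace_eq_zero_of_mem_ZHorn hX⟩

/-- the Horn locus is the image of `Z_Horn` under `X ↦ XXᵀ`. -/
theorem horn_locus_eq_image (A : Matrix (Fin 5) (Fin 5) ℝ) (hA : A.IsSymm) :
    ((∃ (k : ℕ) (B : Matrix (Fin 5) (Fin k) ℝ), (∀ i j, 0 ≤ B i j) ∧ A = B * Bᵀ) ∧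
      A.PosDef ∧ (∀ i j, 0 < A i j) ∧
      (∃ d : Fin 5 → ℝ, (∀ i, 0 < d i) ∧
        Matrix.trace (Aᵀ * (diagonal d * Horn * diagonal d)) = 0)) ↔
    ∃ X ∈ ZHorn, A = X * Xᵀ :=
  horn_locus_eq_image_general A
end

section
/- Every matrix in Z_Horn lies in the vanishing locus of the polynomial X ↦ det(H ∘ X): for all strictly positive reals d₁,…,d₅, y₁,…,y₅, z₁,…,z₅, the matrix X = diag(d₁,…,d₅) · B(y) · diag(z₁,…,z₅) satisfies det(H ∘ X) = 0, where ∘ denotes the entrywise (Hadamard) product, H is the Horn matrix, and B(y) is the 5×5 matrix with rows (1, 0, 0, y₄, y₅+1), (y₁+1, 1, 0, 0, y₅), (y₁, y₂+1, 1, 0, 0), (0, y₂, y₃+1, 1, 0), (0, 0, y₃, y₄+1, 1). -/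
open Matrix

/-!
Hadamard multiplication by `H` commutes with scaling rows and columns, so
`det (H ∘ diag(d) B(y) diag(z)) = (∏ dᵢ) (∏ zᵢ) det (H ∘ B(y))`. The only nonzero entries of
column `j` of `H ∘ B(y)` are `1`, `-(yⱼ + 1)` and `yⱼ` (rows `j`, `j + 1`, `j + 2` mod 5), so every
column sums to zero: the all-ones vector lies in the left kernel, and the determinant vanishes
identically in `y`.
-/

namespace Matrix

theorem hadamard_diagonal_mul_mul_diagonal {m n R : Type*} [Fintype m] [Fintype n]
    [DecidableEq m] [DecidableEq n] [CommSemiring R] (A B : Matrix m n R) (d : m → R)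
    (z : n → R) :
    A ⊙ (diagonal d * B * diagonal z) = diagonal d * (A ⊙ B) * diagonal z := by
  ext i j
  simp only [hadamard_apply, mul_diagonal, diagonal_mul]
  ring

theorem det_eq_zero_of_sum_col_eq_zero {n R : Type*} [Fintype n] [DecidableEq n] [Nonempty n]
    [CommRing R] [IsDomain R] (M : Matrix n n R) (h : ∀ j, ∑ i, M i j = 0) : M.det = 0 := by
  refine exists_vecMul_eq_zero_iff.mp ⟨fun _ => 1, one_ne_zero, funext fun j => ?_⟩
  simpa [vecMul, dotProduct] using h j

end Matrix

theorem sum_col_Horn_hadamard_Bmat (y : Fin 5 → ℝ) (j : Fin 5) :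
    ∑ i, (Horn ⊙ Bmat y) i j = 0 := by
  fin_cases j <;> simp [Fin.sum_univ_five, Horn, Bmat]

theorem ZHorn_vanishes_general (d y z : Fin 5 → ℝ) :
    det (Matrix.hadamard Horn (diagonal d * Bmat y * diagonal z)) = 0 := by
  rw [hadamard_diagonal_mul_mul_diagonal, det_mul, det_mul,
    det_eq_zero_of_sum_col_eq_zero _ (sum_col_Horn_hadamard_Bmat y), mul_zero, zero_mul]

/-- every matrix of `Z_Horn` satisfies `det(H ∘ X) = 0`, where `∘` is the
Hadamard (entrywise) product. -/
theorem ZHorn_vanishes (d y z : Fin 5 → ℝ)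
    (hd : ∀ i, 0 < d i) (hy : ∀ i, 0 < y i) (hz : ∀ i, 0 < z i) :
    det (Matrix.hadamard Horn (diagonal d * Bmat y * diagonal z)) = 0 :=
  ZHorn_vanishes_general d y z
end

section
/- For every n and k, the set CPR_n(k) of real symmetric n×n matrices A such that A = BBᵀ for some entrywise nonnegative n×k matrix B is a closed cone: it is a closed subset of the space of real symmetric n×n matrices, and it is closed under multiplication by nonnegative real scalars. -/
open Matrix

/-- `CPR n k`: the set of real `n×n` matrices admitting an entrywise nonnegative `n×k`
factorization `A = BBᵀ` (such matrices are automatically symmetric). -/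
def CPR (n k : ℕ) : Set (Matrix (Fin n) (Fin n) ℝ) :=
  {A | ∃ B : Matrix (Fin n) (Fin k) ℝ, (∀ i j, 0 ≤ B i j) ∧ A = B * Bᵀ}

/-! `CPR n k` is the image of the closed set of entrywise nonnegative matrices under
`B ↦ B * Bᵀ`. That map is proper, since `trace (B * Bᵀ)` is the sum of the squares of the
entries of `B`, hence it is a closed map. Scaling by `c ≥ 0` is absorbed by `B ↦ √c • B`. -/

section

variable {m k : Type*} [Fintype m] [Fintype k]

lemma sq_le_trace_mul_transpose_self (B : Matrix m k ℝ) (i : m) (j : k) :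
    B i j ^ 2 ≤ (B * Bᵀ).trace := calc
  B i j ^ 2 ≤ ∑ j', B i j' ^ 2 :=
    Finset.single_le_sum (fun j' _ => sq_nonneg (B i j')) (Finset.mem_univ j)
  _ ≤ ∑ i', ∑ j', B i' j' ^ 2 :=
    Finset.single_le_sum (f := fun i' => ∑ j', B i' j' ^ 2)
      (fun i' _ => Finset.sum_nonneg fun j' _ => sq_nonneg (B i' j')) (Finset.mem_univ i)
  _ = (B * Bᵀ).trace := by simp [trace, mul_apply, sq]

lemma isCompact_preimage_mul_transpose_self {K : Set (Matrix m m ℝ)} (hK : IsCompact K) :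
    IsCompact ((fun B : Matrix m k ℝ => B * Bᵀ) ⁻¹' K) := by
  obtain ⟨C, hC⟩ := (hK.image continuous_id.matrix_trace).bddAbove
  have hbox : IsCompact (Set.univ.pi fun _ : m => Set.univ.pi fun _ : k => Set.Icc (-√C) √C) :=
    isCompact_univ_pi fun _ => isCompact_univ_pi fun _ => isCompact_Icc
  refine hbox.of_isClosed_subset (hK.isClosed.preimage (by fun_prop)) fun B hB => ?_
  simp only [Set.mem_univ_pi]
  intro i j
  exact abs_le.mp <| Real.abs_le_sqrt <|
    (sq_le_trace_mul_transpose_self B i j).trans (hC ⟨_, hB, rfl⟩)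

lemma isProperMap_mul_transpose_self :
    IsProperMap fun B : Matrix m k ℝ => B * Bᵀ := by
  have : CompactlyCoherentSpace (Matrix m m ℝ) :=
    inferInstanceAs (CompactlyCoherentSpace (m → m → ℝ))
  exact isProperMap_iff_isCompact_preimage.mpr
    ⟨by fun_prop, fun _ hK => isCompact_preimage_mul_transpose_self hK⟩

end

lemma CPR_eq_image (n k : ℕ) :
    CPR n k = (fun B : Matrix (Fin n) (Fin k) ℝ => B * Bᵀ) '' {B | ∀ i j, 0 ≤ B i j} := by
  ext A
  simp [CPR, eq_comm]

lemma isClosed_CPR (n k : ℕ) : IsClosed (CPR n k) := by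
  rw [CPR_eq_image]
  refine isProperMap_mul_transpose_self.isClosedMap _ ?_
  simp only [Set.ofPred_forall]
  exact isClosed_iInter fun i => isClosed_iInter fun j => isClosed_le continuous_const (by fun_prop)

lemma smul_mem_CPR {n k : ℕ} {c : ℝ} (hc : 0 ≤ c) {A : Matrix (Fin n) (Fin n) ℝ}
    (hA : A ∈ CPR n k) : c • A ∈ CPR n k := by
  obtain ⟨B, hB, rfl⟩ := hA
  refine ⟨√c • B, fun i j => mul_nonneg (Real.sqrt_nonneg c) (hB i j), ?_⟩
  rw [transpose_smul, smul_mul, Matrix.mul_smul, smul_smul, Real.mul_self_sqrt hc]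

/-- for every `n` and `k`, `CPR n k` is a closed cone: it is a closed subset
and is stable under multiplication by nonnegative scalars. -/
theorem CPR_isClosed_cone (n k : ℕ) :
    IsClosed (CPR n k) ∧ ∀ c : ℝ, 0 ≤ c → ∀ A ∈ CPR n k, c • A ∈ CPR n k :=
  ⟨isClosed_CPR n k, fun _ hc _ hA => smul_mem_CPR hc hA⟩
end

section
/- The explicit 7×7 circulant matrix A whose first row is (163, 108, 27, 4, 4, 27, 108) (and whose i-th row is the cyclic shift of the first row by i−1 positions) satisfies A = BBᵀ, where B is the entrywise nonnegative 7×14 matrix whose rows are: row 1: (√27, 51/√27, √27, 0, 0, 0, 0, √(2/3), 0, 0, √6, √6, 0, 0); row 2: (0, √27, 51/√27, √27, 0, 0, 0, 0, √(2/3), 0, 0, √6, √6, 0); row 3: (0, 0, √27, 51/√27, √27, 0, 0, 0, 0, √(2/3), 0, 0, √6, √6); row 4: (0, 0, 0, √27, 51/√27, √27, 0, √6, 0, 0, √(2/3), 0, 0, √6); row 5: (0, 0, 0, 0, √27, 51/√27, √27, √6, √6, 0, 0, √(2/3), 0, 0); row 6: (√27, 0, 0, 0, 0, √27, 51/√27,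 0, √6, √6, 0, 0, √(2/3), 0); row 7: (51/√27, √27, 0, 0, 0, 0, √27, 0, 0, √6, √6, 0, 0, √(2/3)). In particular, A is completely positive with cp-rank at most 14. -/
open Matrix Real

/-- The first row `(163, 108, 27, 4, 4, 27, 108)`. -/
def firstRow : Fin 7 → ℝ := ![163, 108, 27, 4, 4, 27, 108]

/-- The circulant matrix whose `i`-th row is the cyclic shift of the first row by `i` positions,
i.e. `A i j = firstRow (j - i)`. -/
def Acirc : Matrix (Fin 7) (Fin 7) ℝ := Matrix.of fun i j => firstRow (j - i)

/-- The explicit nonnegative 7×14 factor matrix. -/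
noncomputable def Bfac : Matrix (Fin 7) (Fin 14) ℝ :=
  !![Real.sqrt 27, 51 / Real.sqrt 27, Real.sqrt 27, 0, 0, 0, 0,
       Real.sqrt (2/3), 0, 0, Real.sqrt 6, Real.sqrt 6, 0, 0;
     0, Real.sqrt 27, 51 / Real.sqrt 27, Real.sqrt 27, 0, 0, 0,
       0, Real.sqrt (2/3), 0, 0, Real.sqrt 6, Real.sqrt 6, 0;
     0, 0, Real.sqrt 27, 51 / Real.sqrt 27, Real.sqrt 27, 0, 0,
       0, 0, Real.sqrt (2/3), 0, 0, Real.sqrt 6, Real.sqrt 6;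
     0, 0, 0, Real.sqrt 27, 51 / Real.sqrt 27, Real.sqrt 27, 0,
       Real.sqrt 6, 0, 0, Real.sqrt (2/3), 0, 0, Real.sqrt 6;
     0, 0, 0, 0, Real.sqrt 27, 51 / Real.sqrt 27, Real.sqrt 27,
       Real.sqrt 6, Real.sqrt 6, 0, 0, Real.sqrt (2/3), 0, 0;
     Real.sqrt 27, 0, 0, 0, 0, Real.sqrt 27, 51 / Real.sqrt 27,
       0, Real.sqrt 6, Real.sqrt 6, 0, 0, Real.sqrt (2/3), 0;
     51 / Real.sqrt 27, Real.sqrt 27, 0, 0, 0, 0, Real.sqrt 27,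
       0, 0, Real.sqrt 6, Real.sqrt 6, 0, 0, Real.sqrt (2/3)]

/-!
Both column blocks of `Bfac` are transposed circulants, `Bfac = [C₁ᵀ | C₂ᵀ]`, so
`Bfac Bfacᵀ = C₁ᵀC₁ + C₂ᵀC₂`. The product `Cᵀ C` of a circulant matrix with its transpose is
again circulant, generated by the cyclic autocorrelation of the generator of `C`. Hence the
factorization reduces to one identity of vectors in `ℝ⁷`: `firstRow` is the sum of the
autocorrelations of the two generators, e.g. `163 = 2·27 + 51²/27 + 2/3 + 2·6`.
Since `Acirc` is the transpose of `circulant firstRow`, the symmetry of `Bfac Bfacᵀ` finishes.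
-/

def autocorrelation {n α : Type*} [Fintype n] [Add n] [Mul α] [AddCommMonoid α] (v : n → α) :
    n → α :=
  fun k => ∑ j, v j * v (j + k)

namespace Matrix

variable {m n n₁ n₂ α : Type*}

theorem transpose_circulant_mul_circulant [Fintype n] [AddGroup n] [NonUnitalNonAssocSemiring α]
    (v : n → α) : (circulant v)ᵀ * circulant v = circulant (autocorrelation v) := by
  ext i j
  simp only [mul_apply, transpose_apply, circulant_apply, autocorrelation]
  exact Fintype.sum_equiv (Equiv.subRight i) _ _ fun k => by
    simp only [Equiv.subRight_apply, sub_add_sub_cancel]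

theorem fromCols_mul_transpose_fromCols [Fintype n₁] [Fintype n₂] [Semiring α]
    (A₁ : Matrix m n₁ α) (A₂ : Matrix m n₂ α) :
    fromCols A₁ A₂ * (fromCols A₁ A₂)ᵀ = A₁ * A₁ᵀ + A₂ * A₂ᵀ := by
  rw [transpose_fromCols, fromCols_mul_fromRows]

end Matrix

theorem autocorrelation_band {R : Type*} [CommSemiring R] (a b : R) :
    autocorrelation ![a, b, a, 0, 0, 0, 0] =
      ![2 * a ^ 2 + b ^ 2, 2 * (a * b), a ^ 2, 0, 0, a ^ 2, 2 * (a * b)] := by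
  ext k
  fin_cases k <;>
    simp only [autocorrelation, Fin.sum_univ_seven, Fin.isValue, Fin.reduceFinMk, Fin.reduceAdd,
      cons_val] <;>
    ring

theorem autocorrelation_sparse {R : Type*} [CommSemiring R] (p s : R) :
    autocorrelation ![p, 0, 0, s, s, 0, 0] =
      ![p ^ 2 + 2 * s ^ 2, s ^ 2, 0, 2 * (p * s), 2 * (p * s), 0, s ^ 2] := by
  ext k
  fin_cases k <;>
    simp only [autocorrelation, Fin.sum_univ_seven, Fin.isValue, Fin.reduceFinMk, Fin.reduceAdd,
      cons_val] <;>
    ring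

noncomputable def leftFirstRow : Fin 7 → ℝ := ![√27, 51 / √27, √27, 0, 0, 0, 0]
noncomputable def rightFirstRow : Fin 7 → ℝ := ![√(2/3), 0, 0, √6, √6, 0, 0]

theorem Bfac_eq_fromCols :
    Bfac = (fromCols (circulant leftFirstRow)ᵀ (circulant rightFirstRow)ᵀ).submatrix id
      (finSumFinEquiv (m := 7) (n := 7)).symm := by
  ext i j
  fin_cases i <;> fin_cases j <;> rfl

theorem firstRow_eq_autocorrelation :
    firstRow = autocorrelation leftFirstRow + autocorrelation rightFirstRow := by
  have h27 : √27 ^ 2 = 27 := sq_sqrt (by norm_num)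
  have h6 : √6 ^ 2 = 6 := sq_sqrt (by norm_num)
  have h23 : √(2/3) ^ 2 = 2/3 := sq_sqrt (by norm_num)
  have hps : √(2/3) * √6 = 2 := by
    rw [← sqrt_mul (by norm_num), show (2/3 * 6 : ℝ) = 2 ^ 2 by norm_num, sqrt_sq (by norm_num)]
  have hab : √27 * (51 / √27) = 51 := mul_div_cancel₀ _ (by positivity)
  have hb : (51 / √27) ^ 2 = 2601 / 27 := by rw [div_pow, h27]; norm_num
  rw [leftFirstRow, rightFirstRow, autocorrelation_band, autocorrelation_sparse, h27, hb, h23, h6,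
    hps, hab]
  ext k
  fin_cases k <;> norm_num [firstRow]

theorem leftFirstRow_nonneg (k : Fin 7) : 0 ≤ leftFirstRow k := by
  fin_cases k <;> simp [leftFirstRow, div_nonneg]

theorem rightFirstRow_nonneg (k : Fin 7) : 0 ≤ rightFirstRow k := by
  fin_cases k <;> simp [rightFirstRow, div_nonneg]

/-- the explicit circulant matrix `A` factors as `A = B Bᵀ` with the explicit
entrywise nonnegative 7×14 matrix `B`; in particular `A` is completely positive with
cp-rank at most 14. -/
theorem circulant_factorization :
    (∀ i j, 0 ≤ Bfac i j) ∧ Acirc = Bfac * Bfacᵀ ∧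
      ∃ C : Matrix (Fin 7) (Fin 14) ℝ, (∀ i j, 0 ≤ C i j) ∧ Acirc = C * Cᵀ := by
  have hnonneg : ∀ i j, 0 ≤ Bfac i j := by
    intro i j
    rw [Bfac_eq_fromCols, submatrix_apply]
    rcases (finSumFinEquiv (m := 7) (n := 7)).symm j with k | k
    · exact leftFirstRow_nonneg (k - i)
    · exact rightFirstRow_nonneg (k - i)
  have hgram : circulant firstRow = Bfac * Bfacᵀ := by
    rw [Bfac_eq_fromCols, transpose_submatrix, submatrix_mul_equiv, submatrix_id_id,
      fromCols_mul_transpose_fromCols, transpose_transpose, transpose_transpose,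
      transpose_circulant_mul_circulant, transpose_circulant_mul_circulant, ← circulant_add,
      ← firstRow_eq_autocorrelation]
  have hA : Acirc = Bfac * Bfacᵀ := by
    rw [show Acirc = (circulant firstRow)ᵀ from rfl, hgram, transpose_mul, transpose_transpose]
  exact ⟨hnonneg, hA, Bfac, hnonneg, hA⟩
end
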